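/- arXiv:2111.07486 — 6 statements merged into one kernel-verified Lean document; each statement's English description precedes it below -/
import Mathlib

section
/- Let M be a square matrix over ℂ with operator norm ‖M‖ ≤ 1, and suppose ‖e^{Mt}‖ ≤ Δ for all t ≥ 0 for some Δ ≥ 1. Let k, m be positive integers with (2/(k+1)!) · m · Δ · (Δ+1) ≤ 1, and let T_k(M) = ∑_{j=0}^{k} M^j/j! be the truncated Taylor series. Then for every l with 0 ≤ l ≤ m, ‖e^{Ml} − T_k(M)^l‖ ≤ 2·l·Δ·(Δ+1)/(k+1)!. -/
/-!
The Taylor remainder `e^M - T_k(M)` is dominated termwise by the scalar remainder of `exp` at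
`‖M‖ ≤ 1`, so `δ := ‖e^M - T_k(M)‖ ≤ 2/(k+1)!`. As `e^M` and `T_k(M)` commute,
`e^{Ml} - T_k(M)^l = (∑_{i<l} e^{Mi} T_k(M)^{l-1-i}) (e^M - T_k(M))`, and an induction on `l`
shows that `T_k(M)^i` stays within distance `1` of `e^{Mi}`, hence has norm at most `Δ + 1`,
as long as `i Δ (Δ+1) δ ≤ 1`.
-/

open NormedSpace Finset Nat

section Taylor

variable (𝕂 : Type*) {A : Type*}

def expTaylor [Field 𝕂] [Ring A] [Module 𝕂 A] (k : ℕ) (x : A) : A :=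
  ∑ j ∈ range (k + 1), (1 / (j ! : 𝕂)) • x ^ j

theorem Commute.expTaylor_right [Field 𝕂] [Ring A] [Algebra 𝕂 A] {x y : A} (h : Commute y x)
    (k : ℕ) : Commute y (expTaylor 𝕂 k x) :=
  Commute.sum_right _ _ _ fun j _ => (h.pow_right j).smul_right _

variable {𝕂} [RCLike 𝕂] [NormedRing A] [NormedAlgebra 𝕂 A] [CompleteSpace A]

theorem norm_exp_sub_expTaylor_le_exp_norm_sub (k : ℕ) (x : A) :
    ‖exp x - expTaylor 𝕂 k x‖ ≤ Real.exp ‖x‖ - ∑ j ∈ range (k + 1), ‖x‖ ^ j / j ! := by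
  have hx : HasSum (fun n => (n !⁻¹ : 𝕂) • x ^ n) (exp x) := exp_series_hasSum_exp' x
  have hnorm : HasSum (fun n => ‖x‖ ^ n / n !) (Real.exp ‖x‖) := by
    rw [Real.exp_eq_exp_ℝ]
    exact expSeries_div_hasSum_exp _
  rw [← hasSum_nat_add_iff' (k + 1)] at hx hnorm
  have hT : expTaylor 𝕂 k x = ∑ j ∈ range (k + 1), (j ! ⁻¹ : 𝕂) • x ^ j := by
    simp only [expTaylor, one_div]
  rw [hT]
  refine hx.norm_le_of_bounded hnorm fun n => ?_
  have hn : 0 < n + (k + 1) := by omega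
  calc ‖((n + (k + 1))! ⁻¹ : 𝕂) • x ^ (n + (k + 1))‖
      ≤ ‖((n + (k + 1))! ⁻¹ : 𝕂)‖ * ‖x‖ ^ (n + (k + 1)) :=
        (norm_smul_le _ _).trans (by gcongr; exact norm_pow_le' x hn)
    _ = ‖x‖ ^ (n + (k + 1)) / (n + (k + 1))! := by
        rw [norm_inv, RCLike.norm_natCast, inv_mul_eq_div]

theorem norm_exp_sub_expTaylor_le {x : A} (hx : ‖x‖ ≤ 1) (k : ℕ) :
    ‖exp x - expTaylor 𝕂 k x‖ ≤ 2 / (k + 1)! := by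
  have hfact : (0 : ℝ) < (k + 1)! := by positivity
  calc ‖exp x - expTaylor 𝕂 k x‖
      ≤ |Real.exp ‖x‖ - ∑ j ∈ range (k + 1), ‖x‖ ^ j / j !| :=
        (norm_exp_sub_expTaylor_le_exp_norm_sub k x).trans (le_abs_self _)
    _ ≤ |‖x‖| ^ (k + 1) * ((k + 1).succ / ((k + 1)! * (k + 1 : ℕ))) :=
        Real.exp_bound (by rwa [abs_norm]) k.succ_pos
    _ ≤ 1 * (2 / (k + 1)!) := by
        gcongr ?_ * ?_
        · exact pow_le_one₀ (abs_nonneg _) (by rwa [abs_norm])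
        · rw [div_le_div_iff₀ (by positivity) hfact]
          push_cast
          nlinarith
    _ = 2 / (k + 1)! := one_mul _

end Taylor

theorem NormedSpace.exp_natCast_smul {A : Type*} [NormedRing A] [NormedAlgebra ℝ A]
    [CompleteSpace A] (n : ℕ) (x : A) : exp ((n : ℝ) • x) = exp x ^ n := by
  let : NormedAlgebra ℚ A := NormedAlgebra.restrictScalars ℚ ℝ A
  rw [Nat.cast_smul_eq_nsmul, exp_nsmul]

section PowerBounded

variable {R : Type*} [NormedRing R] {a b : R}

theorem Commute.norm_pow_sub_pow_le (h : Commute a b) {C D : ℝ} {l : ℕ}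
    (ha : ∀ i < l, ‖a ^ i‖ ≤ C) (hb : ∀ i < l, ‖b ^ i‖ ≤ D) :
    ‖a ^ l - b ^ l‖ ≤ l * (C * D) * ‖a - b‖ := by
  rw [← h.geom_sum₂_mul]
  refine (norm_mul_le _ _).trans (mul_le_mul_of_nonneg_right ?_ (norm_nonneg _))
  calc ‖∑ i ∈ range l, a ^ i * b ^ (l - 1 - i)‖
      ≤ ∑ i ∈ range l, ‖a ^ i * b ^ (l - 1 - i)‖ := norm_sum_le _ _
    _ ≤ ∑ _i ∈ range l, C * D := by
        refine sum_le_sum fun i hi => ?_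
        have hil : i < l := mem_range.mp hi
        exact (norm_mul_le _ _).trans (mul_le_mul (ha i hil) (hb _ (by omega))
          (norm_nonneg _) ((norm_nonneg _).trans (ha i hil)))
    _ = l * (C * D) := by rw [sum_const, card_range, nsmul_eq_mul]

theorem Commute.norm_pow_sub_pow_le_of_norm_pow_le (h : Commute a b) {Δ δ : ℝ} {m : ℕ}
    (ha : ∀ i < m, ‖a ^ i‖ ≤ Δ) (hab : ‖a - b‖ ≤ δ) (hm : m * Δ * (Δ + 1) * δ ≤ 1) :
    ∀ l ≤ m, ‖a ^ l - b ^ l‖ ≤ l * Δ * (Δ + 1) * δ := by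
  intro l
  induction l using Nat.strong_induction_on with
  | _ l ih =>
    intro hl
    rcases l.eq_zero_or_pos with rfl | hl0
    · simp
    have hΔ : 0 ≤ Δ := (norm_nonneg _).trans (ha 0 (by omega))
    have hδ : 0 ≤ δ := (norm_nonneg _).trans hab
    have hb : ∀ i < l, ‖b ^ i‖ ≤ Δ + 1 := by
      intro i hi
      have hi_small : i * Δ * (Δ + 1) * δ ≤ 1 := by
        refine le_trans ?_ hm
        gcongr
        exact_mod_cast (hi.trans_le hl).le
      calc ‖b ^ i‖ ≤ ‖a ^ i‖ + ‖a ^ i - b ^ i‖ := norm_le_insert _ _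
        _ ≤ Δ + 1 := add_le_add (ha i (by omega)) ((ih i hi (by omega)).trans hi_small)
    calc ‖a ^ l - b ^ l‖ ≤ l * (Δ * (Δ + 1)) * ‖a - b‖ :=
          h.norm_pow_sub_pow_le (fun i hi => ha i (by omega)) hb
      _ ≤ l * (Δ * (Δ + 1)) * δ := by gcongr
      _ = l * Δ * (Δ + 1) * δ := by ring

end PowerBounded

theorem exp_taylor_power_error_general {N : ℕ}
    (M : EuclideanSpace ℂ (Fin N) →L[ℂ] EuclideanSpace ℂ (Fin N))
    (hM : ‖M‖ ≤ 1) (Δ : ℝ)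
    (hexp : ∀ t : ℝ, 0 ≤ t → ‖NormedSpace.exp (t • M)‖ ≤ Δ)
    (k m : ℕ)
    (hcond : 2 / (Nat.factorial (k + 1)) * m * Δ * (Δ + 1) ≤ 1) :
    ∀ l : ℕ, l ≤ m →
      ‖NormedSpace.exp ((l : ℝ) • M) - (∑ j ∈ Finset.range (k + 1), (1 / (Nat.factorial j) : ℂ) • M ^ j) ^ l‖
        ≤ 2 * l * Δ * (Δ + 1) / (Nat.factorial (k + 1)) := by
  intro l hl
  have hpow : ∀ i < m, ‖exp M ^ i‖ ≤ Δ := fun i _ => by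
    simpa only [exp_natCast_smul i M] using hexp i i.cast_nonneg
  have hcomm : Commute (exp M) (expTaylor ℂ k M) := (Commute.refl M).exp_left.expTaylor_right ℂ k
  have key := hcomm.norm_pow_sub_pow_le_of_norm_pow_le hpow (norm_exp_sub_expTaylor_le hM k)
    (by linarith) l hl
  rw [exp_natCast_smul l M]
  exact key.trans_eq (by ring)

/-- Let `M` be an operator with `‖M‖ ≤ 1` and `‖e^{Mt}‖ ≤ Δ` for all `t ≥ 0`, with `Δ ≥ 1`.
If `k, m` are positive integers with `2 m Δ (Δ+1)/(k+1)! ≤ 1` and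
`T_k(M) = ∑_{j=0}^{k} M^j/j!`, then for every `0 ≤ l ≤ m`,
`‖e^{Ml} − T_k(M)^l‖ ≤ 2 l Δ (Δ+1)/(k+1)!`. -/
theorem exp_taylor_power_error {N : ℕ}
    (M : EuclideanSpace ℂ (Fin N) →L[ℂ] EuclideanSpace ℂ (Fin N))
    (hM : ‖M‖ ≤ 1) (Δ : ℝ) (hΔ : 1 ≤ Δ)
    (hexp : ∀ t : ℝ, 0 ≤ t → ‖NormedSpace.exp (t • M)‖ ≤ Δ)
    (k m : ℕ) (hk : 0 < k) (hm : 0 < m)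
    (hcond : 2 / (Nat.factorial (k + 1)) * m * Δ * (Δ + 1) ≤ 1) :
    ∀ l : ℕ, l ≤ m →
      ‖NormedSpace.exp ((l : ℝ) • M) - (∑ j ∈ Finset.range (k + 1), (1 / (Nat.factorial j) : ℂ) • M ^ j) ^ l‖
        ≤ 2 * l * Δ * (Δ + 1) / (Nat.factorial (k + 1)) :=
  exp_taylor_power_error_general M hM Δ hexp k m hcond
end

section
/- Let |ψ⟩ = α|0⟩|ψ₀⟩ + √(1−α²)|1⟩|ψ₁⟩ and |φ⟩ = β|0⟩|φ₀⟩ + √(1−β²)|1⟩|φ₁⟩ where |ψ₀⟩, |ψ₁⟩, |φ₀⟩, |φ₁⟩ are unit vectors and α, β ∈ [0,1]. If ‖ψ − φ‖ ≤ δ < α, then ‖ψ₀ − φ₀‖ ≤ 2δ/(α − δ). -/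
/-- Berry et al. lemma: for `ψ = α|0⟩|ψ₀⟩ + √(1−α²)|1⟩|ψ₁⟩` and
`φ = β|0⟩|φ₀⟩ + √(1−β²)|1⟩|φ₁⟩` with unit vectors `ψ₀, ψ₁, φ₀, φ₁`, `α, β ∈ [0,1]`,
if `‖ψ − φ‖ ≤ δ < α` then `‖ψ₀ − φ₀‖ ≤ 2δ/(α − δ)`.  The space `ℂ² ⊗ H` is modelled as
`H × H` with the `L²` product norm, the two components being the `|0⟩` and `|1⟩` parts. -/
theorem qubit_component_close {H : Type*} [NormedAddCommGroup H] [InnerProductSpace ℂ H]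
    (ψ₀ ψ₁ φ₀ φ₁ : H) (hψ₀ : ‖ψ₀‖ = 1) (hψ₁ : ‖ψ₁‖ = 1) (hφ₀ : ‖φ₀‖ = 1) (hφ₁ : ‖φ₁‖ = 1)
    (α β : ℝ) (hα0 : 0 ≤ α) (hα1 : α ≤ 1) (hβ0 : 0 ≤ β) (hβ1 : β ≤ 1) (δ : ℝ)
    (hδα : δ < α)
    (hdist :
      ‖((WithLp.equiv 2 (H × H)).symm (α • ψ₀, Real.sqrt (1 - α ^ 2) • ψ₁)) -
        ((WithLp.equiv 2 (H × H)).symm (β • φ₀, Real.sqrt (1 - β ^ 2) • φ₁))‖ ≤ δ) :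
    ‖ψ₀ - φ₀‖ ≤ 2 * δ / (α - δ) := by
  set x := ((WithLp.equiv 2 (H × H)).symm (α • ψ₀, Real.sqrt (1 - α ^ 2) • ψ₁)) -
        ((WithLp.equiv 2 (H × H)).symm (β • φ₀, Real.sqrt (1 - β ^ 2) • φ₁)) with hx
  have hδ0 : 0 ≤ δ := le_trans (norm_nonneg x) hdist
  have hfst : x.fst = α • ψ₀ - β • φ₀ := rfl
  have h1 : ‖α • ψ₀ - β • φ₀‖ ≤ δ := by
    have := WithLp.prod_norm_sq_eq_of_L2 x
    rw [hfst] at this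
    nlinarith [norm_nonneg x.snd, norm_nonneg (α • ψ₀ - β • φ₀), norm_nonneg x,
      sq_nonneg ‖x.snd‖]
  have hab : |α - β| ≤ δ := by
    have h2 : |‖α • ψ₀‖ - ‖β • φ₀‖| ≤ ‖α • ψ₀ - β • φ₀‖ := abs_norm_sub_norm_le _ _
    rw [norm_smul, norm_smul, hψ₀, hφ₀] at h2
    simp only [mul_one, Real.norm_eq_abs, abs_of_nonneg hα0, abs_of_nonneg hβ0] at h2
    exact h2.trans h1
  have key : α * ‖ψ₀ - φ₀‖ ≤ 2 * δ := by
    have : α • ψ₀ - α • φ₀ = (α • ψ₀ - β • φ₀) + (β - α) • φ₀ := by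
      rw [sub_smul]; abel
    have h3 : ‖α • ψ₀ - α • φ₀‖ ≤ δ + δ := by
      rw [this]
      refine (norm_add_le _ _).trans (add_le_add h1 ?_)
      rw [norm_smul, hφ₀, mul_one, Real.norm_eq_abs, abs_sub_comm]
      exact hab
    rw [← smul_sub, norm_smul, Real.norm_eq_abs, abs_of_nonneg hα0] at h3
    linarith
  have hαδ : 0 < α - δ := by linarith
  have hn : ‖ψ₀ - φ₀‖ ≤ 2 := by
    calc ‖ψ₀ - φ₀‖ ≤ ‖ψ₀‖ + ‖φ₀‖ := norm_sub_le _ _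
    _ = 2 := by rw [hψ₀, hφ₀]; norm_num
  rw [le_div_iff₀ hαδ]
  nlinarith
end

section
/- Let B and C be N×N complex matrices such that the product of any c+1 matrices each of the form e^{B s} C (for s ≥ 0) vanishes when C is strictly block upper triangular with c+1 diagonal blocks. If ‖e^{Bt}‖ ≤ e^{λt} with λ < 0 and ‖C‖ ≤ μ, then ‖e^{(B+C)t}‖ ≤ e^{λt} ∑_{k=0}^{c} (μt)^k / k! for all t ≥ 0. -/
/-!
Expand `e^{t(B+C)}` in powers of `C` by iterating Duhamel's formula: `D₀(t) = e^{tB}` and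
`D_{k+1}(t) = ∫₀ᵗ e^{(t-s)B} C D_k(s) ds`. Induction gives `‖D_k(t)‖ ≤ e^{λt} (μt)^k / k!`.
Another induction on `k` shows `P D_k(t) = 0` whenever `P` is a product of `c + 1 - k` factors
`e^{sB} C` with `s ≥ 0`; for `P = C` this says `C D_c(t) = 0`. Hence the finite sum
`D₀ + ⋯ + D_c` already solves `S' = (B + C) S`, `S(0) = 1`, i.e. it equals `e^{t(B+C)}`, and the
bound follows term by term.
-/

open NormedSpace intervalIntegral MeasureTheory

section Exponential

variable {A : Type*} [NormedRing A] [NormedAlgebra ℝ A] [CompleteSpace A]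

theorem exp_smul_mul_exp_smul (x : A) (s t : ℝ) :
    exp (s • x) * exp (t • x) = exp ((s + t) • x) := by
  have hball (y : A) : y ∈ Metric.eball (0 : A) (expSeries ℝ A).radius :=
    (expSeries_radius_eq_top ℝ A).symm ▸ edist_lt_top _ _
  rw [add_smul, exp_add_of_commute_of_mem_ball (((Commute.refl x).smul_left s).smul_right t)
    (hball _) (hball _)]

@[fun_prop]
theorem Continuous.exp_smul_const {f : ℝ → ℝ} (hf : Continuous f) (x : A) :
    Continuous fun t => exp (f t • x) :=
  (differentiable_exp_smul_const ℝ x).continuous.comp hf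

theorem intervalIntegral.integral_const_mul_of_intervalIntegrable {f : ℝ → A} {a b : ℝ}
    (hf : IntervalIntegrable f volume a b) (c : A) :
    ∫ x in a..b, c * f x = c * ∫ x in a..b, f x :=
  (ContinuousLinearMap.mul ℝ A c).intervalIntegral_comp_comm hf

theorem eq_exp_smul_of_hasDerivAt {f : ℝ → A} {D : A}
    (hf : ∀ u, 0 ≤ u → HasDerivAt f (D * f u) u) (h0 : f 0 = 1) {t : ℝ} (ht : 0 ≤ t) :
    f t = exp (t • D) := by
  have hg : ∀ u ∈ Set.uIcc 0 t, HasDerivAt (fun v => exp ((t - v) • D) * f v) 0 u := by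
    intro u hu
    have hexp : HasDerivAt (fun v : ℝ => exp ((t - v) • D))
        ((-1 : ℝ) • (D * exp ((t - u) • D))) u :=
      (hasDerivAt_exp_smul_const' D (t - u)).scomp u ((hasDerivAt_id u).const_sub t)
    refine (hexp.mul (hf u (Set.uIcc_of_le ht ▸ hu).1)).congr_deriv ?_
    rw [← mul_assoc, ((Commute.refl D).smul_right (t - u)).exp_right.eq]
    simp
  have hconst := integral_eq_sub_of_hasDerivAt hg intervalIntegrable_const
  simpa [h0, sub_eq_zero, eq_comm] using hconst

end Exponential

section Dyson

variable {A : Type*} [NormedRing A] [NormedAlgebra ℝ A] (B C : A)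

-- `e^{tB}` is pulled out of the integral so that the derivative comes from the product rule and
-- the fundamental theorem of calculus; `dysonTerm_succ_eq_integral` gives the usual form.
noncomputable def dysonTerm : ℕ → ℝ → A
  | 0, t => exp (t • B)
  | k + 1, t => exp (t • B) * ∫ s in (0 : ℝ)..t, exp ((-s) • B) * (C * dysonTerm k s)

@[simp]
theorem dysonTerm_zero (t : ℝ) : dysonTerm B C 0 t = exp (t • B) := rfl

theorem dysonTerm_succ (k : ℕ) (t : ℝ) : dysonTerm B C (k + 1) t =
    exp (t • B) * ∫ s in (0 : ℝ)..t, exp ((-s) • B) * (C * dysonTerm B C k s) := rfl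

theorem dysonTerm_succ_apply_zero (k : ℕ) : dysonTerm B C (k + 1) 0 = 0 := by
  simp [dysonTerm_succ]

variable [CompleteSpace A]

@[fun_prop]
theorem continuous_dysonTerm (k : ℕ) : Continuous (dysonTerm B C k) := by
  induction k with
  | zero => exact continuous_id.exp_smul_const B
  | succ k ih =>
    have : Continuous fun s : ℝ => exp ((-s) • B) * (C * dysonTerm B C k s) := by fun_prop
    exact (continuous_id.exp_smul_const B).mul
      (continuous_primitive (this.intervalIntegrable ·) 0)

theorem dysonTerm_succ_eq_integral (k : ℕ) (t : ℝ) :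
    dysonTerm B C (k + 1) t =
      ∫ s in (0 : ℝ)..t, exp ((t - s) • B) * (C * dysonTerm B C k s) := by
  have : Continuous fun s : ℝ => exp ((-s) • B) * (C * dysonTerm B C k s) := by fun_prop
  rw [dysonTerm_succ, ← integral_const_mul_of_intervalIntegrable (this.intervalIntegrable _ _)]
  simp_rw [← mul_assoc, exp_smul_mul_exp_smul, ← sub_eq_add_neg]

theorem hasDerivAt_dysonTerm_succ (k : ℕ) (t : ℝ) :
    HasDerivAt (dysonTerm B C (k + 1))
      (B * dysonTerm B C (k + 1) t + C * dysonTerm B C k t) t := by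
  have hcont : Continuous fun s : ℝ => exp ((-s) • B) * (C * dysonTerm B C k s) := by fun_prop
  have hprim := integral_hasDerivAt_right (hcont.intervalIntegrable 0 t)
    (hcont.stronglyMeasurableAtFilter _ _) hcont.continuousAt
  refine ((hasDerivAt_exp_smul_const' B t).mul hprim).congr_deriv ?_
  rw [dysonTerm_succ, ← mul_assoc, ← mul_assoc, exp_smul_mul_exp_smul]
  simp [mul_assoc]

theorem hasDerivAt_sum_dysonTerm (c : ℕ) (t : ℝ) :
    HasDerivAt (fun u => ∑ k ∈ Finset.range (c + 1), dysonTerm B C k u)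
      (B * ∑ k ∈ Finset.range (c + 1), dysonTerm B C k t +
        C * ∑ k ∈ Finset.range c, dysonTerm B C k t) t := by
  induction c with
  | zero => simpa using hasDerivAt_exp_smul_const' B t
  | succ c ih =>
    have h := ih.add (hasDerivAt_dysonTerm_succ B C c t)
    refine (h.congr_of_eventuallyEq (.of_forall fun u => Finset.sum_range_succ _ _)).congr_deriv
      ?_
    simp only [Finset.sum_range_succ, mul_add]
    abel

theorem norm_dysonTerm_le {lam μ : ℝ} (hB : ∀ t : ℝ, 0 ≤ t → ‖exp (t • B)‖ ≤ Real.exp (lam * t))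
    (hC : ‖C‖ ≤ μ) (k : ℕ) {t : ℝ} (ht : 0 ≤ t) :
    ‖dysonTerm B C k t‖ ≤ Real.exp (lam * t) * ((μ * t) ^ k / k.factorial) := by
  induction k generalizing t with
  | zero => simpa using hB t ht
  | succ k ih =>
    have hpointwise : ∀ u ∈ Set.Ioc 0 t, ‖exp ((t - u) • B) * (C * dysonTerm B C k u)‖ ≤
        Real.exp (lam * t) * (μ ^ (k + 1) / k.factorial) * u ^ k := by
      intro u ⟨hu0, hut⟩
      calc ‖exp ((t - u) • B) * (C * dysonTerm B C k u)‖
          ≤ Real.exp (lam * (t - u)) * (μ * (Real.exp (lam * u) * ((μ * u) ^ k / k.factorial))) :=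
            (norm_mul_le_of_le (hB _ (by linarith))
              (norm_mul_le_of_le hC (ih hu0.le))).trans_eq rfl
        _ = Real.exp (lam * t) * (μ ^ (k + 1) / k.factorial) * u ^ k := by
            rw [mul_left_comm μ, ← mul_assoc, ← Real.exp_add]
            ring_nf
    have hintegrable : IntervalIntegrable
        (fun u => Real.exp (lam * t) * (μ ^ (k + 1) / k.factorial) * u ^ k) volume 0 t :=
      (continuous_const.mul (continuous_pow k)).intervalIntegrable 0 t
    rw [dysonTerm_succ_eq_integral]
    refine (norm_integral_le_of_norm_le ht (.of_forall hpointwise) hintegrable).trans_eq ?_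
    rw [intervalIntegral.integral_const_mul, integral_pow, Nat.factorial_succ]
    push_cast
    field_simp
    ring

theorem list_prod_mul_dysonTerm_eq_zero {c : ℕ}
    (hnil : ∀ s : Fin (c + 1) → ℝ, (∀ i, 0 ≤ s i) →
      (List.ofFn fun i => exp (s i • B) * C).prod = 0)
    {k m : ℕ} (hkm : m + k = c + 1) {s : Fin m → ℝ} (hs : ∀ i, 0 ≤ s i) {t : ℝ} (ht : 0 ≤ t) :
    (List.ofFn fun i => exp (s i • B) * C).prod * dysonTerm B C k t = 0 := by
  induction k generalizing m t with
  | zero =>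
    obtain rfl : m = c + 1 := by omega
    rw [hnil s hs, zero_mul]
  | succ k ih =>
    have hcont : Continuous fun u : ℝ => exp ((t - u) • B) * (C * dysonTerm B C k u) := by
      fun_prop
    rw [dysonTerm_succ_eq_integral, ← integral_const_mul_of_intervalIntegrable
      (hcont.intervalIntegrable _ _)]
    refine (integral_congr fun u hu => ?_).trans integral_zero
    obtain ⟨hu0, hut⟩ : u ∈ Set.Icc 0 t := Set.uIcc_of_le ht ▸ hu
    have hsnoc : ∀ i, 0 ≤ (Fin.snoc s (t - u) : Fin (m + 1) → ℝ) i :=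
      Fin.lastCases (by simpa using hut) (by simpa using hs)
    have h := ih (by omega) hsnoc hu0
    rw [List.ofFn_succ', List.prod_concat] at h
    simpa [mul_assoc] using h

theorem mul_dysonTerm_eq_zero {c : ℕ}
    (hnil : ∀ s : Fin (c + 1) → ℝ, (∀ i, 0 ≤ s i) →
      (List.ofFn fun i => exp (s i • B) * C).prod = 0)
    {t : ℝ} (ht : 0 ≤ t) : C * dysonTerm B C c t = 0 := by
  have h := list_prod_mul_dysonTerm_eq_zero B C hnil (k := c) (m := 1) (by omega)
    (s := fun _ => 0) (fun _ => le_rfl) ht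
  simpa using h

theorem exp_smul_add_eq_sum_dysonTerm {c : ℕ}
    (hnil : ∀ s : Fin (c + 1) → ℝ, (∀ i, 0 ≤ s i) →
      (List.ofFn fun i => exp (s i • B) * C).prod = 0)
    {t : ℝ} (ht : 0 ≤ t) :
    exp (t • (B + C)) = ∑ k ∈ Finset.range (c + 1), dysonTerm B C k t := by
  have hderiv (u : ℝ) (hu : 0 ≤ u) :
      HasDerivAt (fun u => ∑ k ∈ Finset.range (c + 1), dysonTerm B C k u)
        ((B + C) * ∑ k ∈ Finset.range (c + 1), dysonTerm B C k u) u := by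
    have hC : C * ∑ k ∈ Finset.range (c + 1), dysonTerm B C k u =
        C * ∑ k ∈ Finset.range c, dysonTerm B C k u := by
      rw [Finset.sum_range_succ, mul_add, mul_dysonTerm_eq_zero B C hnil hu, add_zero]
    refine (hasDerivAt_sum_dysonTerm B C c u).congr_deriv ?_
    rw [add_mul, hC]
  have hinit : ∑ k ∈ Finset.range (c + 1), dysonTerm B C k 0 = 1 := by
    simp [Finset.sum_range_succ', dysonTerm_succ_apply_zero]
  exact (eq_exp_smul_of_hasDerivAt hderiv hinit ht).symm

end Dyson

theorem dyson_series_bound_general {N : ℕ}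
    (B C : EuclideanSpace ℂ (Fin N) →L[ℂ] EuclideanSpace ℂ (Fin N))
    (c : ℕ) (lam μ : ℝ) (hμ : ‖C‖ ≤ μ)
    (hB : ∀ t : ℝ, 0 ≤ t → ‖exp (t • B)‖ ≤ Real.exp (lam * t))
    (hnil : ∀ s : Fin (c + 1) → ℝ, (∀ i, 0 ≤ s i) →
      (List.ofFn fun i => exp (s i • B) * C).prod = 0) :
    ∀ t : ℝ, 0 ≤ t →
      ‖exp (t • (B + C))‖ ≤
        Real.exp (lam * t) * ∑ k ∈ Finset.range (c + 1), (μ * t) ^ k / (Nat.factorial k) := by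
  intro t ht
  rw [exp_smul_add_eq_sum_dysonTerm B C hnil ht, Finset.mul_sum]
  exact (norm_sum_le _ _).trans (Finset.sum_le_sum fun k _ => norm_dysonTerm_le B C hB hμ k ht)

/-- Dyson-series bound: let `B, C` be operators such that every product of `c+1` factors,
each of the form `e^{Bs} C` with `s ≥ 0`, vanishes (as happens when `C` is strictly block
upper triangular with `c+1` diagonal blocks, and `B` block diagonal). If `‖e^{Bt}‖ ≤ e^{λt}`
with `λ < 0` and `‖C‖ ≤ μ`, then `‖e^{(B+C)t}‖ ≤ e^{λt} ∑_{k=0}^{c} (μt)^k/k!` for `t ≥ 0`. -/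
theorem dyson_series_bound {N : ℕ}
    (B C : EuclideanSpace ℂ (Fin N) →L[ℂ] EuclideanSpace ℂ (Fin N))
    (c : ℕ) (lam μ : ℝ) (hlam : lam < 0) (hμ : ‖C‖ ≤ μ)
    (hB : ∀ t : ℝ, 0 ≤ t → ‖exp (t • B)‖ ≤ Real.exp (lam * t))
    (hnil : ∀ s : Fin (c + 1) → ℝ, (∀ i, 0 ≤ s i) →
      (List.ofFn fun i => exp (s i • B) * C).prod = 0) :
    ∀ t : ℝ, 0 ≤ t →
      ‖exp (t • (B + C))‖ ≤
        Real.exp (lam * t) * ∑ k ∈ Finset.range (c + 1), (μ * t) ^ k / (Nat.factorial k) :=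
  dyson_series_bound_general B C c lam μ hμ hB hnil
end

section
/- Let A = B + C with ‖e^{Bt}‖ ≤ e^{−γt} for all t ≥ 0 where γ > 0, C strictly upper triangular in a (c+1)×(c+1) block decomposition preserved by B, and ‖C‖ ≤ (c+1)‖F₂‖. If (c+1)‖F₂‖/γ ≤ 1, then ‖e^{At}‖ ≤ c+1 for all t ≥ 0. -/
/-! With `T f (t) = ∫₀ᵗ e^{(t-s)B} C f(s) ds`, Duhamel's formula reads
`e^{t(B+C)} = e^{tB} + T(e^{·(B+C)})(t)`; iterating it gives the Dyson expansion
`e^{t(B+C)} = ∑_{k ≤ c} Tᵏ(e^{·B})(t) + T^{c+1}(e^{·(B+C)})(t)`. The remainder vanishes because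
every integrand of `T^{c+1} f (t)` contains a product of `c + 1` factors `e^{sB} C` with `s ≥ 0`,
and by induction `‖Tᵏ(e^{·B})(t)‖ ≤ e^{-γt} (‖C‖t)ᵏ / k! ≤ e^{(‖C‖-γ)t} ≤ 1` since `‖C‖ ≤ γ`. -/

open NormedSpace intervalIntegral
open scoped Nat

lemma List.prod_ofFn_snoc {M α : Type*} [Monoid M] {n : ℕ} (g : α → M) (s : Fin n → α) (r : α) :
    (List.ofFn fun i => g ((Fin.snoc s r : Fin (n + 1) → α) i)).prod =
      (List.ofFn fun i => g (s i)).prod * g r := by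
  rw [List.ofFn_succ']
  simp

lemma integral_mul_mul_pow_div_factorial (a t : ℝ) (k : ℕ) :
    ∫ s in (0 : ℝ)..t, a * (a * s) ^ k / k ! = (a * t) ^ (k + 1) / (k + 1)! := by
  have hpoly : ∀ s : ℝ, a * (a * s) ^ k / k ! = a ^ (k + 1) / k ! * s ^ k := fun s => by ring
  simp_rw [hpoly]
  rw [integral_const_mul, integral_pow, Nat.factorial_succ]
  push_cast
  field_simp
  ring

lemma Real.exp_neg_mul_mul_pow_div_factorial_le_one {a γ t : ℝ} (ha : 0 ≤ a) (haγ : a ≤ γ)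
    (ht : 0 ≤ t) (k : ℕ) : Real.exp (-γ * t) * (a * t) ^ k / k ! ≤ 1 :=
  calc Real.exp (-γ * t) * (a * t) ^ k / k ! = Real.exp (-γ * t) * ((a * t) ^ k / k !) := by ring
    _ ≤ Real.exp (-γ * t) * Real.exp (a * t) := by
      gcongr; exact Real.pow_div_factorial_le_exp _ (by positivity) k
    _ = Real.exp ((a - γ) * t) := by rw [← Real.exp_add]; ring_nf
    _ ≤ 1 := Real.exp_le_one_iff.2 (mul_nonpos_of_nonpos_of_nonneg (by linarith) ht)

section Dyson

variable {A : Type*} [NormedRing A] [NormedAlgebra ℝ A] [CompleteSpace A]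

noncomputable def expCurve (X : A) : C(ℝ, A) :=
  ⟨fun t => exp (t • X), (differentiable_exp_smul_const ℝ X).continuous⟩

@[simp] lemma expCurve_apply (X : A) (t : ℝ) : expCurve X t = exp (t • X) := rfl

variable (B C : A)

lemma continuous_dysonIntegrand (f : C(ℝ, A)) :
    Continuous fun p : ℝ × ℝ => exp ((p.1 - p.2) • B) * (C * f p.2) :=
  ((expCurve B).continuous.comp (continuous_fst.sub continuous_snd)).mul
    (continuous_const.mul (f.continuous.comp continuous_snd))

lemma intervalIntegrable_dysonIntegrand (f : C(ℝ, A)) (t : ℝ) {a b : ℝ} :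
    IntervalIntegrable (fun s => exp ((t - s) • B) * (C * f s)) MeasureTheory.volume a b :=
  ((continuous_dysonIntegrand B C f).comp
    (continuous_const.prodMk continuous_id)).intervalIntegrable _ _

noncomputable def dysonOp : AddMonoid.End C(ℝ, A) where
  toFun f := ⟨fun t => ∫ s in (0 : ℝ)..t, exp ((t - s) • B) * (C * f s),
    continuous_parametric_intervalIntegral_of_continuous
      (continuous_dysonIntegrand B C f) continuous_id⟩
  map_zero' := by ext; simp
  map_add' f g := by
    ext t
    simp only [ContinuousMap.add_apply, ContinuousMap.coe_mk, mul_add]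
    exact integral_add (intervalIntegrable_dysonIntegrand B C f t)
      (intervalIntegrable_dysonIntegrand B C g t)

lemma dysonOp_apply (f : C(ℝ, A)) (t : ℝ) :
    dysonOp B C f t = ∫ s in (0 : ℝ)..t, exp ((t - s) • B) * (C * f s) := rfl

lemma hasDerivAt_exp_sub_smul_mul_exp_smul (t s : ℝ) :
    HasDerivAt (fun s : ℝ => exp ((t - s) • B) * exp (s • (B + C)))
      (exp ((t - s) • B) * (C * exp (s • (B + C)))) s := by
  have hB : HasDerivAt (fun s : ℝ => exp ((t - s) • B)) (-(exp ((t - s) • B) * B)) s := by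
    simpa [Function.comp_def] using
      (hasDerivAt_exp_smul_const B (t - s)).scomp s ((hasDerivAt_id s).const_sub t)
  exact (hB.mul (hasDerivAt_exp_smul_const' (B + C) s)).congr_deriv (by noncomm_ring)

lemma expCurve_add_eq : expCurve (B + C) = expCurve B + dysonOp B C (expCurve (B + C)) := by
  ext t
  simp only [ContinuousMap.add_apply, dysonOp_apply, expCurve_apply]
  rw [integral_eq_sub_of_hasDerivAt
    (fun s _ => hasDerivAt_exp_sub_smul_mul_exp_smul B C t s)
    (intervalIntegrable_dysonIntegrand B C (expCurve (B + C)) t)]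
  simp

lemma expCurve_add_eq_sum (n : ℕ) :
    expCurve (B + C) = ∑ k ∈ Finset.range n, (dysonOp B C ^ k) (expCurve B) +
      (dysonOp B C ^ n) (expCurve (B + C)) := by
  induction n with
  | zero => simp
  | succ n ih =>
    conv_lhs => rw [ih, expCurve_add_eq B C]
    rw [map_add, Finset.sum_range_succ, add_assoc, pow_succ, AddMonoid.End.coe_mul,
      Function.comp_apply]

lemma dysonOp_pow_apply_eq_zero (n : ℕ) (f : C(ℝ, A))
    (hf : ∀ s : Fin n → ℝ, (∀ i, 0 ≤ s i) → ∀ r, 0 ≤ r →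
      (List.ofFn fun i => exp (s i • B) * C).prod * f r = 0)
    {t : ℝ} (ht : 0 ≤ t) : (dysonOp B C ^ n) f t = 0 := by
  induction n generalizing f with
  | zero => simpa using hf finZeroElim finZeroElim t ht
  | succ n ih =>
    rw [pow_succ, AddMonoid.End.coe_mul, Function.comp_apply]
    refine ih _ fun s hs r hr => ?_
    rw [dysonOp_apply, ← ContinuousLinearMap.mul_apply' ℝ,
      ← (ContinuousLinearMap.mul ℝ A _).intervalIntegral_comp_comm
        (intervalIntegrable_dysonIntegrand B C f r)]
    refine (integral_congr fun σ hσ => ?_).trans integral_zero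
    rw [Set.uIcc_of_le hr] at hσ
    have hsnoc : ∀ i, 0 ≤ (Fin.snoc s (r - σ) : Fin (n + 1) → ℝ) i :=
      Fin.lastCases (by simpa using hσ.2) (by simpa using hs)
    have hprod := hf _ hsnoc σ hσ.1
    rw [List.prod_ofFn_snoc (fun u => exp (u • B) * C)] at hprod
    simpa [mul_assoc] using hprod

lemma norm_dysonOp_apply_le {γ : ℝ} (hB : ∀ t, 0 ≤ t → ‖exp (t • B)‖ ≤ Real.exp (-γ * t))
    (f : C(ℝ, A)) (k : ℕ) {t : ℝ} (ht : 0 ≤ t)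
    (hf : ∀ s ∈ Set.Icc 0 t, ‖f s‖ ≤ Real.exp (-γ * s) * (‖C‖ * s) ^ k / k !) :
    ‖dysonOp B C f t‖ ≤ Real.exp (-γ * t) * (‖C‖ * t) ^ (k + 1) / (k + 1)! := by
  have hpoint : ∀ s ∈ Set.Icc 0 t, ‖exp ((t - s) • B) * (C * f s)‖ ≤
      Real.exp (-γ * t) * (‖C‖ * (‖C‖ * s) ^ k / k !) := fun s hs => by
    have hexp : Real.exp (-γ * (t - s)) * Real.exp (-γ * s) = Real.exp (-γ * t) := by
      rw [← Real.exp_add]; ring_nf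
    calc ‖exp ((t - s) • B) * (C * f s)‖ ≤ ‖exp ((t - s) • B)‖ * (‖C‖ * ‖f s‖) :=
          (norm_mul_le _ _).trans (by gcongr; exact norm_mul_le _ _)
      _ ≤ Real.exp (-γ * (t - s)) * (‖C‖ * (Real.exp (-γ * s) * (‖C‖ * s) ^ k / k !)) := by
          gcongr
          · exact hB _ (sub_nonneg.2 hs.2)
          · exact hf s hs
      _ = Real.exp (-γ * t) * (‖C‖ * (‖C‖ * s) ^ k / k !) := by rw [← hexp]; ring
  calc ‖dysonOp B C f t‖ ≤ ∫ s in (0 : ℝ)..t, ‖exp ((t - s) • B) * (C * f s)‖ :=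
        norm_integral_le_integral_norm ht
    _ ≤ ∫ s in (0 : ℝ)..t, Real.exp (-γ * t) * (‖C‖ * (‖C‖ * s) ^ k / k !) :=
        integral_mono_on ht (intervalIntegrable_dysonIntegrand B C f t).norm
          (by apply Continuous.intervalIntegrable; fun_prop) hpoint
    _ = Real.exp (-γ * t) * (‖C‖ * t) ^ (k + 1) / (k + 1)! := by
        rw [integral_const_mul, integral_mul_mul_pow_div_factorial, mul_div_assoc]

lemma norm_dysonOp_pow_expCurve_le {γ : ℝ}
    (hB : ∀ t, 0 ≤ t → ‖exp (t • B)‖ ≤ Real.exp (-γ * t)) (k : ℕ) {t : ℝ} (ht : 0 ≤ t) :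
    ‖(dysonOp B C ^ k) (expCurve B) t‖ ≤ Real.exp (-γ * t) * (‖C‖ * t) ^ k / k ! := by
  induction k generalizing t with
  | zero => simpa using hB t ht
  | succ k ih =>
    rw [pow_succ', AddMonoid.End.coe_mul, Function.comp_apply]
    exact norm_dysonOp_apply_le B C hB _ k ht fun s hs => ih hs.1

end Dyson

/-- Let `A = B + C`, where `‖e^{Bt}‖ ≤ e^{-γt}` for `t ≥ 0` with `γ > 0`, `C` is strictly
upper triangular in a `(c+1)×(c+1)` block decomposition preserved by `B` (so that every
product of `c+1` factors `e^{Bs} C` vanishes), and `‖C‖ ≤ (c+1)‖F₂‖`.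
If `(c+1)‖F₂‖/γ ≤ 1`, then `‖e^{At}‖ ≤ c+1` for all `t ≥ 0`. -/
theorem exp_norm_le_of_dyson {N : ℕ}
    (B C : EuclideanSpace ℂ (Fin N) →L[ℂ] EuclideanSpace ℂ (Fin N))
    (c : ℕ) (γ nF2 : ℝ) (hγ : 0 < γ)
    (hB : ∀ t : ℝ, 0 ≤ t → ‖exp (t • B)‖ ≤ Real.exp (-γ * t))
    (hnil : ∀ s : Fin (c + 1) → ℝ, (∀ i, 0 ≤ s i) →
      (List.ofFn fun i => exp (s i • B) * C).prod = 0)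
    (hC : ‖C‖ ≤ ((c : ℝ) + 1) * nF2)
    (hcond : ((c : ℝ) + 1) * nF2 / γ ≤ 1) :
    ∀ t : ℝ, 0 ≤ t → ‖exp (t • (B + C))‖ ≤ (c : ℝ) + 1 := by
  intro t ht
  have hCγ : ‖C‖ ≤ γ := hC.trans ((div_le_one hγ).1 hcond)
  have hremainder : (dysonOp B C ^ (c + 1)) (expCurve (B + C)) t = 0 :=
    dysonOp_pow_apply_eq_zero B C (c + 1) _ (fun s hs _ _ => by rw [hnil s hs, zero_mul]) ht
  change ‖expCurve (B + C) t‖ ≤ _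
  rw [expCurve_add_eq_sum B C (c + 1), ContinuousMap.add_apply, hremainder, add_zero,
    ContinuousMap.coe_sum, Finset.sum_apply]
  calc ‖∑ k ∈ Finset.range (c + 1), (dysonOp B C ^ k) (expCurve B) t‖
      ≤ ∑ k ∈ Finset.range (c + 1), ‖(dysonOp B C ^ k) (expCurve B) t‖ := norm_sum_le _ _
    _ ≤ ∑ k ∈ Finset.range (c + 1), 1 := Finset.sum_le_sum fun k _ =>
        (norm_dysonOp_pow_expCurve_le B C hB k ht).trans
          (Real.exp_neg_mul_mul_pow_div_factorial_le_one (norm_nonneg C) hCγ ht k)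
    _ = c + 1 := by simp
end

section
/- Consider the homotopy perturbation iterates defined by ν₀(t) = e^{F₁t} u_in and ν_{i+1}(t) = ∫₀ᵗ e^{F₁(t−τ)} F₂ ∑_{j=0}^{i} ν_j(τ) ⊗ ν_{i−j}(τ) dτ, where F₁ is normal with all eigenvalues having real part ≤ Re(λ₁) < 0. Let K₁ = ‖u_in‖·‖F₂‖/|Re(λ₁)| and let α_i be the i-th Catalan number. Then for all i ≥ 0 and t ≥ 0, ‖ν_i(t)‖ ≤ α_i · K₁^i · ‖u_in‖. -/
/-!
By strong induction on `i`. Since `‖e^{F₁ t}‖ ≤ 1` for `t ≥ 0`, `‖ν₀ t‖ ≤ ‖u_in‖`. As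
`‖a ⊗ b‖ = ‖a‖ ‖b‖`, the source term of `ν_{i+1}` is bounded by `‖F₂‖ ∑_j ‖ν_j‖ ‖ν_{i-j}‖`, which
the induction hypothesis and the Catalan recursion bound by `‖F₂‖ α_{i+1} K₁^i ‖u_in‖²`.
Integrating it against `‖e^{F₁(t-τ)}‖ ≤ e^{λ₁(t-τ)}` costs at most a factor `1/|λ₁|`, which
supplies the missing factor of `K₁`.
-/

open NormedSpace Finset

section EuclideanSpace

variable {ι κ α : Type*} [Fintype ι] [Fintype κ]

theorem EuclideanSpace.norm_toLp_mul (a : EuclideanSpace ℝ ι) (b : EuclideanSpace ℝ κ) :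
    ‖(WithLp.equiv 2 (ι × κ → ℝ)).symm fun p => a p.1 * b p.2‖ = ‖a‖ * ‖b‖ := by
  simp only [EuclideanSpace.norm_eq, WithLp.equiv_symm_apply]
  rw [← Real.sqrt_mul (by positivity), Fintype.sum_prod_type, Finset.sum_mul_sum]
  simp [mul_pow]

theorem EuclideanSpace.norm_toLp_sum_mul_le (s : Finset α) (a : α → EuclideanSpace ℝ ι)
    (b : α → EuclideanSpace ℝ κ) :
    ‖(WithLp.equiv 2 (ι × κ → ℝ)).symm fun p => ∑ j ∈ s, a j p.1 * b j p.2‖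
      ≤ ∑ j ∈ s, ‖a j‖ * ‖b j‖ := by
  have hsum : (fun p : ι × κ => ∑ j ∈ s, a j p.1 * b j p.2)
      = ∑ j ∈ s, fun p : ι × κ => a j p.1 * b j p.2 := by
    ext p; simp
  rw [hsum, WithLp.equiv_symm_apply, WithLp.toLp_sum]
  refine (norm_sum_le _ _).trans_eq (Finset.sum_congr rfl fun j _ => ?_)
  exact EuclideanSpace.norm_toLp_mul (a j) (b j)

end EuclideanSpace

theorem integral_exp_mul_sub_le {c : ℝ} (hc : c < 0) (t : ℝ) :
    ∫ τ in (0 : ℝ)..t, Real.exp (c * (t - τ)) ≤ 1 / |c| := by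
  have hint : ∫ τ in (0 : ℝ)..t, Real.exp (c * (t - τ)) = (1 - Real.exp (c * t)) / |c| := by
    rw [intervalIntegral.integral_comp_sub_left (fun x => Real.exp (c * x)), sub_self, sub_zero,
      intervalIntegral.integral_comp_mul_left (fun x => Real.exp x) hc.ne, integral_exp,
      mul_zero, Real.exp_zero, abs_of_neg hc, smul_eq_mul]
    field_simp
    ring
  rw [hint]
  gcongr
  linarith [Real.exp_pos (c * t)]

section ExponentialDecay

variable {E F : Type*} [NormedAddCommGroup E] [NormedSpace ℝ E] [NormedAddCommGroup F]
  [NormedSpace ℝ F] {S : ℝ → E →L[ℝ] F} {c : ℝ}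

theorem norm_apply_le_of_norm_le_exp (hc : c ≤ 0) (hS : ∀ s, 0 ≤ s → ‖S s‖ ≤ Real.exp (c * s))
    {t : ℝ} (ht : 0 ≤ t) (x : E) : ‖S t x‖ ≤ ‖x‖ :=
  calc ‖S t x‖ ≤ ‖S t‖ * ‖x‖ := (S t).le_opNorm x
    _ ≤ 1 * ‖x‖ := by
      gcongr
      exact (hS t ht).trans (Real.exp_le_one_iff.2 (mul_nonpos_of_nonpos_of_nonneg hc ht))
    _ = ‖x‖ := one_mul _

theorem norm_integral_apply_le_of_norm_le_exp [CompleteSpace F] (hc : c < 0)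
    (hS : ∀ s, 0 ≤ s → ‖S s‖ ≤ Real.exp (c * s)) {f : ℝ → E} {t M : ℝ} (ht : 0 ≤ t) (hM : 0 ≤ M)
    (hf : ∀ τ ∈ Set.Ioc 0 t, ‖f τ‖ ≤ M) :
    ‖∫ τ in (0 : ℝ)..t, S (t - τ) (f τ)‖ ≤ M / |c| := by
  have hpt : ∀ τ ∈ Set.Ioc 0 t, ‖S (t - τ) (f τ)‖ ≤ M * Real.exp (c * (t - τ)) := fun τ hτ =>
    calc ‖S (t - τ) (f τ)‖ ≤ ‖S (t - τ)‖ * ‖f τ‖ := (S (t - τ)).le_opNorm _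
      _ ≤ Real.exp (c * (t - τ)) * M :=
        mul_le_mul (hS _ (by linarith [hτ.2])) (hf τ hτ) (norm_nonneg _) (Real.exp_pos _).le
      _ = M * Real.exp (c * (t - τ)) := mul_comm _ _
  calc ‖∫ τ in (0 : ℝ)..t, S (t - τ) (f τ)‖
      ≤ ∫ τ in (0 : ℝ)..t, M * Real.exp (c * (t - τ)) :=
        intervalIntegral.norm_integral_le_of_norm_le ht (.of_forall hpt)
          ((by fun_prop : Continuous fun τ => M * Real.exp (c * (t - τ))).intervalIntegrable _ _)
    _ = M * ∫ τ in (0 : ℝ)..t, Real.exp (c * (t - τ)) := intervalIntegral.integral_const_mul _ _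
    _ ≤ M * (1 / |c|) := mul_le_mul_of_nonneg_left (integral_exp_mul_sub_le hc t) hM
    _ = M / |c| := mul_one_div _ _

end ExponentialDecay

theorem sum_range_catalan_mul_catalan_sub (i : ℕ) :
    ∑ j ∈ range (i + 1), (catalan j : ℝ) * catalan (i - j) = catalan (i + 1) := by
  rw [catalan_succ', Nat.sum_antidiagonal_eq_sum_range_succ_mk]
  push_cast
  rfl

theorem sum_range_mul_sub_le_catalan {a : ℕ → ℝ} {K M : ℝ} (hK : 0 ≤ K) (hM : 0 ≤ M) (i : ℕ)
    (ha0 : ∀ j ≤ i, 0 ≤ a j) (ha : ∀ j ≤ i, a j ≤ catalan j * K ^ j * M) :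
    ∑ j ∈ range (i + 1), a j * a (i - j) ≤ catalan (i + 1) * K ^ i * M ^ 2 := by
  calc ∑ j ∈ range (i + 1), a j * a (i - j)
      ≤ ∑ j ∈ range (i + 1), (catalan j * K ^ j * M) * (catalan (i - j) * K ^ (i - j) * M) := by
        refine sum_le_sum fun j hj => ?_
        have hj : j ≤ i := Nat.lt_succ_iff.mp (mem_range.mp hj)
        exact mul_le_mul (ha j hj) (ha _ (Nat.sub_le i j)) (ha0 _ (Nat.sub_le i j)) (by positivity)
    _ = ∑ j ∈ range (i + 1), (catalan j : ℝ) * catalan (i - j) * (K ^ i * M ^ 2) := by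
        refine sum_congr rfl fun j hj => ?_
        have hj : j ≤ i := Nat.lt_succ_iff.mp (mem_range.mp hj)
        rw [← Nat.add_sub_cancel' hj, pow_add, Nat.add_sub_cancel_left]
        ring
    _ = catalan (i + 1) * K ^ i * M ^ 2 := by rw [← sum_mul, sum_range_catalan_mul_catalan_sub]; ring

/-- Homotopy perturbation iterate bound: with `ν₀(t) = e^{F₁ t} u_in`,
`ν_{i+1}(t) = ∫₀ᵗ e^{F₁(t−τ)} F₂ (∑_{j=0}^{i} ν_j(τ) ⊗ ν_{i−j}(τ)) dτ`,
`‖e^{F₁ t}‖ ≤ e^{λ₁ t}` with `λ₁ < 0` (as for normal `F₁` with spectral abscissa `λ₁`),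
`K₁ = ‖u_in‖ ‖F₂‖ / |λ₁|` and `α_i` the `i`-th Catalan number, we have
`‖ν_i(t)‖ ≤ α_i K₁^i ‖u_in‖` for all `i ≥ 0` and `t ≥ 0`. -/
theorem homotopy_iterate_bound {n : ℕ}
    (F₁ : EuclideanSpace ℝ (Fin n) →L[ℝ] EuclideanSpace ℝ (Fin n))
    (F₂ : EuclideanSpace ℝ (Fin n × Fin n) →L[ℝ] EuclideanSpace ℝ (Fin n))
    (uin : EuclideanSpace ℝ (Fin n)) (lam1 : ℝ) (hlam1 : lam1 < 0)
    (hF₁ : ∀ t : ℝ, 0 ≤ t → ‖exp (t • F₁)‖ ≤ Real.exp (lam1 * t))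
    (ν : ℕ → ℝ → EuclideanSpace ℝ (Fin n))
    (hν0 : ∀ t : ℝ, ν 0 t = exp (t • F₁) uin)
    (hνsucc : ∀ (i : ℕ) (t : ℝ),
      ν (i + 1) t = ∫ τ in (0 : ℝ)..t,
        exp ((t - τ) • F₁)
          (F₂ ((WithLp.equiv 2 (Fin n × Fin n → ℝ)).symm fun p =>
            ∑ j ∈ Finset.range (i + 1), ν j τ p.1 * ν (i - j) τ p.2))) :
    ∀ (i : ℕ) (t : ℝ), 0 ≤ t →
      ‖ν i t‖ ≤ (catalan i : ℝ) * (‖uin‖ * ‖F₂‖ / |lam1|) ^ i * ‖uin‖ := by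
  set K := ‖uin‖ * ‖F₂‖ / |lam1|
  intro i
  induction i using Nat.strong_induction_on with
  | _ i ih =>
  intro t ht
  cases i with
  | zero =>
    simpa [hν0] using norm_apply_le_of_norm_le_exp hlam1.le hF₁ ht uin
  | succ i =>
    have hsource : ∀ τ ∈ Set.Ioc 0 t,
        ‖F₂ ((WithLp.equiv 2 (Fin n × Fin n → ℝ)).symm fun p =>
            ∑ j ∈ range (i + 1), ν j τ p.1 * ν (i - j) τ p.2)‖
          ≤ ‖F₂‖ * (catalan (i + 1) * K ^ i * ‖uin‖ ^ 2) := fun τ hτ =>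
      (F₂.le_opNorm _).trans <| mul_le_mul_of_nonneg_left
        ((EuclideanSpace.norm_toLp_sum_mul_le _ _ _).trans <|
          sum_range_mul_sub_le_catalan (by positivity) (norm_nonneg _) i (fun _ _ => norm_nonneg _)
            fun j hj => ih j (Nat.lt_succ_of_le hj) τ hτ.1.le)
        (norm_nonneg _)
    rw [hνsucc]
    calc _ ≤ ‖F₂‖ * (catalan (i + 1) * K ^ i * ‖uin‖ ^ 2) / |lam1| :=
          norm_integral_apply_le_of_norm_le_exp hlam1 hF₁ ht (by positivity) hsource
      _ = catalan (i + 1) * K ^ (i + 1) * ‖uin‖ := by ring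
end

section
/- Let A be an N×N matrix with ‖Ah‖ ≤ 1 and ‖e^{At}‖ ≤ c+1 for all t ≥ 0, and suppose 2m(c+1)(c+2)/(k+1)! ≤ 1. Let y(t) = e^{At} y_in and x_{j,0} = T_k(Ah)^j y_in with T_k(Ah) = ∑_{l=0}^{k} (Ah)^l/l!. Then for all 0 ≤ j ≤ m, ‖y(jh) − x_{j,0}‖ ≤ 2j(c+1)(c+2)‖y_in‖/(k+1)!. -/
/-! With `E = exp (h • A)` and `T = T_k(h • A)` we have `exp ((j * h) • A) = E ^ j` and
`E ^ j - T ^ j = ∑_{i < j} E ^ i (E - T) T ^ (j - 1 - i)`. The Taylor remainder of the exponential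
gives `‖E - T‖ ≤ 2 / (k + 1)!` and the powers of `E` are bounded by `c + 1`. By strong induction
on `j`, the smallness condition keeps `‖T ^ i‖ ≤ ‖E ^ i‖ + ‖E ^ i - T ^ i‖ ≤ c + 2` for `i < j`,
so each of the `j` terms is at most `2 (c + 1) (c + 2) / (k + 1)!`. -/

open NormedSpace

open Finset in
theorem pow_sub_pow_eq_sum_pow_mul_sub_mul_pow {R : Type*} [Ring R] (x y : R) (n : ℕ) :
    x ^ n - y ^ n = ∑ i ∈ range n, x ^ i * (x - y) * y ^ (n - 1 - i) := by
  induction n with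
  | zero => simp
  | succ n ih =>
    calc x ^ (n + 1) - y ^ (n + 1) = (x - y) * y ^ n + x * (x ^ n - y ^ n) := by
          rw [pow_succ', pow_succ']; noncomm_ring
      _ = _ := by
          rw [ih, mul_sum, sum_range_succ' _ n]
          simp only [pow_succ', mul_assoc, pow_zero, one_mul, Nat.add_sub_cancel,
            Nat.sub_zero, Nat.sub_sub, add_comm 1]
          abel

theorem norm_pow_sub_pow_le_of_norm_pow_le {R : Type*} [NormedRing R] {x y : R} {C δ : ℝ} {m : ℕ}
    (hx : ∀ n ≤ m, ‖x ^ n‖ ≤ C) (hxy : ‖x - y‖ ≤ δ) (hsmall : m * C * (C + 1) * δ ≤ 1) :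
    ∀ j ≤ m, ‖x ^ j - y ^ j‖ ≤ j * C * (C + 1) * δ := by
  have hC : 0 ≤ C := (norm_nonneg _).trans (hx 0 (Nat.zero_le m))
  have hδ : 0 ≤ δ := (norm_nonneg _).trans hxy
  intro j
  induction j using Nat.strong_induction_on with
  | _ j ih =>
    intro hj
    have hy : ∀ i < j, ‖y ^ i‖ ≤ C + 1 := fun i hi => by
      have hsmall_i : i * C * (C + 1) * δ ≤ 1 :=
        le_trans (by gcongr; exact_mod_cast hi.le.trans hj) hsmall
      calc ‖y ^ i‖ = ‖x ^ i - (x ^ i - y ^ i)‖ := by rw [sub_sub_cancel]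
        _ ≤ ‖x ^ i‖ + ‖x ^ i - y ^ i‖ := norm_sub_le _ _
        _ ≤ C + 1 := add_le_add (hx i (by omega)) ((ih i hi (by omega)).trans hsmall_i)
    rw [pow_sub_pow_eq_sum_pow_mul_sub_mul_pow]
    calc ‖∑ i ∈ Finset.range j, x ^ i * (x - y) * y ^ (j - 1 - i)‖
        ≤ ∑ i ∈ Finset.range j, ‖x ^ i‖ * ‖x - y‖ * ‖y ^ (j - 1 - i)‖ :=
          (norm_sum_le _ _).trans (Finset.sum_le_sum fun i _ => norm_mul₃_le)
      _ ≤ ∑ i ∈ Finset.range j, C * δ * (C + 1) := by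
          gcongr with i hi
          · exact hx i (by have := Finset.mem_range.mp hi; omega)
          · exact hy _ (by have := Finset.mem_range.mp hi; omega)
      _ = j * C * (C + 1) * δ := by
          rw [Finset.sum_const, Finset.card_range, nsmul_eq_mul]; ring

theorem inv_factorial_add_le (n i : ℕ) (hn : 0 < n) :
    ((n + i).factorial : ℝ)⁻¹ ≤ (n.factorial : ℝ)⁻¹ * (1 / 2) ^ i := by
  rw [one_div, inv_pow, ← mul_inv]
  gcongr
  calc (n.factorial : ℝ) * 2 ^ i ≤ n.factorial * (n + 1) ^ i := by
        gcongr; norm_cast; omega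
    _ ≤ (n + i).factorial := by exact_mod_cast Nat.factorial_mul_pow_le_factorial

theorem norm_exp_sub_sum_range_le {𝕂 𝔸 : Type*} [RCLike 𝕂] [NormedRing 𝔸] [NormedAlgebra 𝕂 𝔸]
    [CompleteSpace 𝔸] (k : ℕ) {x : 𝔸} (hx : ‖x‖ ≤ 1) :
    ‖exp x - ∑ l ∈ Finset.range (k + 1), (1 / l.factorial : 𝕂) • x ^ l‖ ≤
      2 / (k + 1).factorial := by
  have htail : exp x - ∑ l ∈ Finset.range (k + 1), (1 / l.factorial : 𝕂) • x ^ l =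
      ∑' i, ((i + (k + 1)).factorial⁻¹ : 𝕂) • x ^ (i + (k + 1)) := by
    rw [congrFun (exp_eq_tsum 𝕂) x,
      ← (expSeries_summable' (𝕂 := 𝕂) x).sum_add_tsum_nat_add (k + 1)]
    simp only [one_div, add_sub_cancel_left]
  rw [htail, div_eq_inv_mul]
  refine tsum_of_norm_bounded (hasSum_geometric_two.mul_left _) fun i => ?_
  rw [norm_smul, norm_inv, RCLike.norm_natCast, add_comm i]
  calc ((k + 1 + i).factorial : ℝ)⁻¹ * ‖x ^ (k + 1 + i)‖ ≤ ((k + 1 + i).factorial : ℝ)⁻¹ * 1 := by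
        gcongr
        exact (norm_pow_le' x (by omega)).trans (pow_le_one₀ (norm_nonneg x) hx)
    _ ≤ _ := by rw [mul_one]; exact inv_factorial_add_le _ _ k.succ_pos

theorem exp_nsmul_of_rclike (𝕂 : Type*) {𝔸 : Type*} [RCLike 𝕂] [NormedRing 𝔸] [NormedAlgebra 𝕂 𝔸]
    [CompleteSpace 𝔸] (n : ℕ) (x : 𝔸) : exp (n • x) = exp x ^ n := by
  let := NormedAlgebra.restrictScalars ℚ 𝕂 𝔸
  exact exp_nsmul n x

theorem linear_ode_solution_error_general {N : ℕ}
    (A : EuclideanSpace ℂ (Fin N) →L[ℂ] EuclideanSpace ℂ (Fin N))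
    (h : ℝ) (hh : 0 < h) (m k : ℕ) (c : ℕ)
    (hAh : ‖h • A‖ ≤ 1)
    (hexp : ∀ t : ℝ, 0 ≤ t → ‖exp (t • A)‖ ≤ (c : ℝ) + 1)
    (hcond : 2 * m * ((c : ℝ) + 1) * ((c : ℝ) + 2) / (Nat.factorial (k + 1)) ≤ 1)
    (yin : EuclideanSpace ℂ (Fin N)) :
    ∀ j : ℕ, j ≤ m →
      ‖exp (((j : ℝ) * h) • A) yin -
          ((∑ l ∈ Finset.range (k + 1), (1 / (Nat.factorial l) : ℂ) • (h • A) ^ l) ^ j) yin‖ ≤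
        2 * j * ((c : ℝ) + 1) * ((c : ℝ) + 2) * ‖yin‖ / (Nat.factorial (k + 1)) := by
  set T := ∑ l ∈ Finset.range (k + 1), (1 / (Nat.factorial l) : ℂ) • (h • A) ^ l
  have hexp_pow (n : ℕ) : exp (h • A) ^ n = exp (((n : ℝ) * h) • A) := by
    rw [← exp_nsmul_of_rclike ℂ, ← Nat.cast_smul_eq_nsmul ℝ, smul_smul]
  have hpow_bound : ∀ n ≤ m, ‖exp (h • A) ^ n‖ ≤ (c : ℝ) + 1 := fun n _ => by
    rw [hexp_pow]
    exact hexp _ (by positivity)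
  have hsmall : m * ((c : ℝ) + 1) * ((c : ℝ) + 1 + 1) * (2 / (k + 1).factorial) ≤ 1 := by
    convert hcond using 1
    ring
  intro j hj
  have hop : ‖exp (h • A) ^ j - T ^ j‖ ≤
      j * ((c : ℝ) + 1) * ((c : ℝ) + 1 + 1) * (2 / (k + 1).factorial) :=
    norm_pow_sub_pow_le_of_norm_pow_le hpow_bound (norm_exp_sub_sum_range_le k hAh) hsmall j hj
  rw [← hexp_pow, ← sub_apply]
  calc ‖(exp (h • A) ^ j - T ^ j) yin‖ ≤ ‖exp (h • A) ^ j - T ^ j‖ * ‖yin‖ :=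
        ContinuousLinearMap.le_opNorm _ _
    _ ≤ j * ((c : ℝ) + 1) * ((c : ℝ) + 1 + 1) * (2 / (k + 1).factorial) * ‖yin‖ := by gcongr
    _ = _ := by ring

/-- Linear ODE solution error: with `‖Ah‖ ≤ 1`, `‖e^{At}‖ ≤ c+1` for `t ≥ 0` and
`2m(c+1)(c+2)/(k+1)! ≤ 1`, setting `y(t) = e^{At} y_in` and
`x_{j,0} = T_k(Ah)^j y_in` with `T_k(Ah) = ∑_{l=0}^{k} (Ah)^l/l!`, we have for `0 ≤ j ≤ m`:
`‖y(jh) − x_{j,0}‖ ≤ 2j(c+1)(c+2)‖y_in‖/(k+1)!`. -/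
theorem linear_ode_solution_error {N : ℕ}
    (A : EuclideanSpace ℂ (Fin N) →L[ℂ] EuclideanSpace ℂ (Fin N))
    (h : ℝ) (hh : 0 < h) (m k : ℕ) (hm : 0 < m) (hk : 0 < k) (c : ℕ)
    (hAh : ‖h • A‖ ≤ 1)
    (hexp : ∀ t : ℝ, 0 ≤ t → ‖exp (t • A)‖ ≤ (c : ℝ) + 1)
    (hcond : 2 * m * ((c : ℝ) + 1) * ((c : ℝ) + 2) / (Nat.factorial (k + 1)) ≤ 1)
    (yin : EuclideanSpace ℂ (Fin N)) :
    ∀ j : ℕ, j ≤ m →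
      ‖exp (((j : ℝ) * h) • A) yin -
          ((∑ l ∈ Finset.range (k + 1), (1 / (Nat.factorial l) : ℂ) • (h • A) ^ l) ^ j) yin‖ ≤
        2 * j * ((c : ℝ) + 1) * ((c : ℝ) + 2) * ‖yin‖ / (Nat.factorial (k + 1)) :=
  linear_ode_solution_error_general A h hh m k c hAh hexp hcond yin
end
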